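/- arXiv:2002.01403 — 6 statements merged into one kernel-verified Lean document; each statement's English description precedes it below -/
import Mathlib

section
/- For every natural number N ≥ 1 and all real numbers a, b, one has ∑_{j=1}^{N} ((N−j)/N) (cos(a j) + 1) cos(b j) ≥ −1. -/
/-!
With the Fejér kernel `F_N(s) = 1 + ∑_{j=1}^N 2 (N - j)/N cos(js)`, which is nonnegative because
`N F_N(s) = |∑_{k<N} e^{iks}|²`, the product-to-sum formulas write the sum as
`(F_N(a+b) + F_N(a-b) - 2)/4 + (F_N(b) - 1)/2 ≥ -1`.
-/

open Finset Real

noncomputable def fejerKernel (N : ℕ) (s : ℝ) : ℝ :=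
  1 + ∑ j ∈ Icc 1 N, 2 * ((N - j) / N) * cos (s * j)

theorem sum_range_cos_mul_sub (n : ℕ) (s : ℝ) :
    ∑ k ∈ range n, cos (s * (n - k)) = ∑ j ∈ Icc 1 n, cos (s * j) := by
  refine sum_nbij' (n - ·) (n - ·) ?_ ?_ ?_ ?_ ?_
  · intro k hk; simp only [mem_range, mem_Icc] at hk ⊢; omega
  · intro j hj; simp only [mem_range, mem_Icc] at hj ⊢; omega
  · intro k hk; simp only [mem_range] at hk; omega
  · intro j hj; simp only [mem_Icc] at hj; omega
  · intro k hk
    rw [Nat.cast_sub (mem_range.mp hk).le]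

theorem sq_sum_cos_add_sq_sum_sin (n : ℕ) (s : ℝ) :
    (∑ k ∈ range n, cos (s * k)) ^ 2 + (∑ k ∈ range n, sin (s * k)) ^ 2
      = n + 2 * ∑ j ∈ Icc 1 n, (n - j) * cos (s * j) := by
  induction n with
  | zero => simp
  | succ n ih =>
    have cross : (∑ k ∈ range n, cos (s * k)) * cos (s * n)
        + (∑ k ∈ range n, sin (s * k)) * sin (s * n) = ∑ j ∈ Icc 1 n, cos (s * j) := by
      rw [← sum_range_cos_mul_sub, sum_mul, sum_mul, ← sum_add_distrib]
      refine sum_congr rfl fun k _ => ?_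
      rw [mul_sub, cos_sub]
      ring
    have weights : ∑ j ∈ Icc 1 (n + 1), ((n + 1 : ℕ) - j : ℝ) * cos (s * j)
        = ∑ j ∈ Icc 1 n, (n - j : ℝ) * cos (s * j) + ∑ j ∈ Icc 1 n, cos (s * j) := by
      rw [sum_Icc_succ_top (by omega), ← sum_add_distrib]
      push_cast
      simp only [sub_self, zero_mul, add_zero]
      exact sum_congr rfl fun j _ => by ring
    rw [sum_range_succ, sum_range_succ, weights, Nat.cast_succ]
    linear_combination ih + 2 * cross + cos_sq_add_sin_sq (s * n)

theorem fejerKernel_nonneg (N : ℕ) (s : ℝ) : 0 ≤ fejerKernel N s := by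
  rcases N.eq_zero_or_pos with rfl | hN
  · simp [fejerKernel]
  have hN' : (0 : ℝ) < N := by exact_mod_cast hN
  have h : N * fejerKernel N s
      = (∑ k ∈ range N, cos (s * k)) ^ 2 + (∑ k ∈ range N, sin (s * k)) ^ 2 := by
    rw [sq_sum_cos_add_sq_sum_sin, fejerKernel, mul_add, mul_one, mul_sum, mul_sum]
    congr 1
    exact sum_congr rfl fun j _ => by field_simp
  exact nonneg_of_mul_nonneg_right (h ▸ by positivity) hN'

theorem sum_Icc_div_mul_cos_eq_fejerKernel (N : ℕ) (s : ℝ) :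
    ∑ j ∈ Icc 1 N, ((N - j) / N : ℝ) * cos (s * j) = (fejerKernel N s - 1) / 2 := by
  rw [fejerKernel, add_sub_cancel_left, sum_div]
  exact sum_congr rfl fun j _ => by ring

theorem sum_mul_cos_add_one_mul_cos {ι : Type*} (t : Finset ι) (w x : ι → ℝ) (a b : ℝ) :
    ∑ i ∈ t, w i * (cos (a * x i) + 1) * cos (b * x i)
      = (∑ i ∈ t, w i * cos ((a + b) * x i)) / 2 + (∑ i ∈ t, w i * cos ((a - b) * x i)) / 2
        + ∑ i ∈ t, w i * cos (b * x i) := by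
  rw [sum_div, sum_div, ← sum_add_distrib, ← sum_add_distrib]
  refine sum_congr rfl fun i _ => ?_
  rw [add_mul, sub_mul, cos_add, cos_sub]
  ring

theorem stmt_6_general (N : ℕ) (a b : ℝ) :
    -1 ≤ ∑ j ∈ Finset.Icc 1 N,
      (((N : ℝ) - j) / N) * (Real.cos (a * j) + 1) * Real.cos (b * j) := by
  rw [sum_mul_cos_add_one_mul_cos, sum_Icc_div_mul_cos_eq_fejerKernel,
    sum_Icc_div_mul_cos_eq_fejerKernel, sum_Icc_div_mul_cos_eq_fejerKernel]
  linarith [fejerKernel_nonneg N (a + b), fejerKernel_nonneg N (a - b), fejerKernel_nonneg N b]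

/-- Core inequality behind parts (1)–(2) of Lemma 3.4:
`∑_{j=1}^{N} ((N−j)/N)(cos(aj) + 1) cos(bj) ≥ −1`. -/
theorem stmt_6 (N : ℕ) (hN : 1 ≤ N) (a b : ℝ) :
    -1 ≤ ∑ j ∈ Finset.Icc 1 N,
      (((N : ℝ) - j) / N) * (Real.cos (a * j) + 1) * Real.cos (b * j) :=
  stmt_6_general N a b
end

section
/- For every natural number N ≥ 1 and every real number a, one has ∑_{j=1}^{N} ((N−j)/N) (cos(a j) + 1) cos(a j) ≥ (N − 4)/4. -/
/-!
The weighted cosine sum `∑_{j=1}^{N} (N - j) cos(jx)` is `(F_N(x) - N) / 2` for the Fejér-type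
square `F_N(x) = |∑_{j<N} e^{ijx}|² ≥ 0`, hence is at least `-N/2`. Writing
`(cos t + 1) cos t = (1 + cos 2t) / 2 + cos t`, `N` times the sum in question becomes
`(1/2) ∑ (N - j) + (1/2) ∑ (N - j) cos(2aj) + ∑ (N - j) cos(aj) ≥ N(N - 1)/4 - N/4 - N/2`.
-/

open Finset Real

lemma sum_range_sub_eq_sum_Icc {M : Type*} [AddCommMonoid M] (f : ℕ → M) (n : ℕ) :
    ∑ j ∈ range n, f (n - j) = ∑ j ∈ Icc 1 n, f j :=
  sum_nbij' (n - ·) (n - ·) (by intro j; simp; omega) (by intro j; simp; omega)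
    (by intro j; simp; omega) (by intro j; simp; omega) (fun _ _ => rfl)

lemma sum_cos_mul_add_sum_sin_mul_sq (N : ℕ) (x : ℝ) :
    (∑ j ∈ range N, cos (x * j)) ^ 2 + (∑ j ∈ range N, sin (x * j)) ^ 2 =
      N + 2 * ∑ j ∈ Icc 1 N, ((N : ℝ) - j) * cos (x * j) := by
  induction N with
  | zero => simp
  | succ n ih =>
    have cross : (∑ j ∈ range n, cos (x * j)) * cos (x * n)
        + (∑ j ∈ range n, sin (x * j)) * sin (x * n) = ∑ j ∈ Icc 1 n, cos (x * j) := by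
      rw [← sum_range_sub_eq_sum_Icc (fun j => cos (x * j)), sum_mul, sum_mul,
        ← sum_add_distrib]
      refine sum_congr rfl fun j hj => ?_
      rw [Nat.cast_sub (mem_range.1 hj).le, mul_sub, cos_sub]
      ring
    have weights : ∑ j ∈ Icc 1 (n + 1), ((↑(n + 1) : ℝ) - j) * cos (x * j) =
        ∑ j ∈ Icc 1 n, ((n : ℝ) - j) * cos (x * j) + ∑ j ∈ Icc 1 n, cos (x * j) := by
      rw [sum_Icc_succ_top (by omega), ← sum_add_distrib]
      push_cast
      simp only [sub_self, zero_mul, add_zero]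
      exact sum_congr rfl fun j _ => by ring
    rw [sum_range_succ, sum_range_succ, weights]
    push_cast
    linarith [sin_sq_add_cos_sq (x * n)]

lemma neg_half_le_sum_Icc_sub_mul_cos (N : ℕ) (x : ℝ) :
    -((N : ℝ) / 2) ≤ ∑ j ∈ Icc 1 N, ((N : ℝ) - j) * cos (x * j) := by
  linarith [sum_cos_mul_add_sum_sin_mul_sq N x, sq_nonneg (∑ j ∈ range N, cos (x * j)),
    sq_nonneg (∑ j ∈ range N, sin (x * j))]

lemma sum_Icc_sub (N : ℕ) : ∑ j ∈ Icc 1 N, ((N : ℝ) - j) = N * (N - 1) / 2 := by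
  induction N with
  | zero => simp
  | succ n ih =>
    rw [sum_Icc_succ_top (by omega)]
    have shift : ∑ j ∈ Icc 1 n, ((↑(n + 1) : ℝ) - j) = ∑ j ∈ Icc 1 n, (((n : ℝ) - j) + 1) :=
      sum_congr rfl fun j _ => by push_cast; ring
    rw [shift, sum_add_distrib, ih, sum_const, Nat.card_Icc]
    push_cast
    ring

theorem stmt_7_general (N : ℕ) (a : ℝ) :
    ((N : ℝ) - 4) / 4 ≤ ∑ j ∈ Finset.Icc 1 N,
      (((N : ℝ) - j) / N) * (Real.cos (a * j) + 1) * Real.cos (a * j) := by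
  rcases N.eq_zero_or_pos with rfl | hN
  · norm_num
  have hN_pos : (0 : ℝ) < N := by exact_mod_cast hN
  have expand : N * ∑ j ∈ Icc 1 N, (((N : ℝ) - j) / N) * (cos (a * j) + 1) * cos (a * j) =
      (∑ j ∈ Icc 1 N, ((N : ℝ) - j)) / 2
        + (∑ j ∈ Icc 1 N, ((N : ℝ) - j) * cos (2 * a * j)) / 2
        + ∑ j ∈ Icc 1 N, ((N : ℝ) - j) * cos (a * j) := by
    rw [mul_sum, sum_div, sum_div, ← sum_add_distrib, ← sum_add_distrib]
    refine sum_congr rfl fun j _ => ?_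
    rw [mul_assoc 2 a, cos_two_mul]
    field_simp
    ring
  rw [← mul_le_mul_iff_right₀ hN_pos, expand, sum_Icc_sub]
  linarith [neg_half_le_sum_Icc_sub_mul_cos N a, neg_half_le_sum_Icc_sub_mul_cos N (2 * a)]

/-- Core inequality behind part (3) of Lemma 3.4:
`∑_{j=1}^{N} ((N−j)/N)(cos(aj) + 1) cos(aj) ≥ (N − 4)/4`. -/
theorem stmt_7 (N : ℕ) (hN : 1 ≤ N) (a : ℝ) :
    ((N : ℝ) - 4) / 4 ≤ ∑ j ∈ Finset.Icc 1 N,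
      (((N : ℝ) - j) / N) * (Real.cos (a * j) + 1) * Real.cos (a * j) :=
  stmt_7_general N a
end

section
/- Let H be a complex Hilbert space, (e_i)_{i ∈ I} a Hilbert (orthonormal) basis of H, and T : H → H a continuous linear operator such that T e_i = c_i · e_i for real numbers c_i. Let 0 < ε ≤ 1 and suppose there is an index i₀ with c_{i₀} ≥ 1/ε while c_i ≥ −1 for all i ∈ I. If f ∈ H satisfies ⟨f, e_{i₀}⟩ = ε and ‖f‖² = ε, then Re⟨T f, f⟩ ≥ ε². -/
open scoped InnerProductSpace ComplexConjugate

/-! Expanding `f = ∑ aᵢ eᵢ` with `aᵢ = ⟪eᵢ, f⟫` gives `Re ⟪T f, f⟫ = ∑ cᵢ |aᵢ|²` and, by Parseval,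
`‖f‖² = ∑ |aᵢ|²`. Since `cᵢ + 1 ≥ 0` for every `i`, dropping all terms but `i₀` from
`Re ⟪T f, f⟫ + ‖f‖² = ∑ (cᵢ + 1) |aᵢ|²` yields `Re ⟪T f, f⟫ ≥ (c_{i₀} + 1) ε² - ε ≥ ε²`. -/

namespace HilbertBasis

variable {H : Type*} [NormedAddCommGroup H] [InnerProductSpace ℂ H] {I : Type*}
  (e : HilbertBasis I ℂ H)

theorem hasSum_norm_inner_sq (f : H) : HasSum (fun i => ‖⟪e i, f⟫_ℂ‖ ^ 2) (‖f‖ ^ 2) := by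
  have h := e.hasSum_inner_mul_inner f f
  simp only [← inner_conj_symm f (e _), Complex.conj_mul', inner_self_eq_norm_sq_to_K] at h
  exact Complex.hasSum_ofReal.mp (by push_cast; exact h)

theorem hasSum_re_apply_inner_self {T : H →L[ℂ] H} {c : I → ℝ}
    (hT : ∀ i, T (e i) = (c i : ℂ) • e i) (f : H) :
    HasSum (fun i => c i * ‖⟪e i, f⟫_ℂ‖ ^ 2) (⟪T f, f⟫_ℂ).re := by
  have hTf : HasSum (fun i => ⟪e i, f⟫_ℂ • (c i : ℂ) • e i) (T f) := by
    simpa [hT, e.repr_apply_apply] using (e.hasSum_repr f).mapL T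
  have h := hTf.mapL (innerSL ℂ f)
  simp only [innerSL_apply_apply, inner_smul_right, ← inner_conj_symm f (e _)] at h
  have hterm : ∀ i, ⟪e i, f⟫_ℂ * (c i * conj ⟪e i, f⟫_ℂ) = ((c i * ‖⟪e i, f⟫_ℂ‖ ^ 2 : ℝ) : ℂ) := by
    intro i
    rw [mul_left_comm, Complex.mul_conj']
    push_cast
    ring
  simp only [hterm] at h
  rw [← inner_conj_symm, Complex.conj_re]
  simpa only [Complex.reCLM_apply, Complex.ofReal_re] using h.mapL Complex.reCLM

theorem le_re_apply_inner_self {T : H →L[ℂ] H} {c : I → ℝ}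
    (hT : ∀ i, T (e i) = (c i : ℂ) • e i) {m : ℝ} (hc : ∀ i, m ≤ c i) (i₀ : I) (f : H) :
    (c i₀ - m) * ‖⟪e i₀, f⟫_ℂ‖ ^ 2 + m * ‖f‖ ^ 2 ≤ (⟪T f, f⟫_ℂ).re := by
  have h : HasSum (fun i => (c i - m) * ‖⟪e i, f⟫_ℂ‖ ^ 2) ((⟪T f, f⟫_ℂ).re - m * ‖f‖ ^ 2) := by
    simpa only [sub_mul] using
      (e.hasSum_re_apply_inner_self hT f).sub ((e.hasSum_norm_inner_sq f).mul_left m)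
  have := le_hasSum h i₀ fun i _ => mul_nonneg (sub_nonneg.mpr (hc i)) (sq_nonneg _)
  linarith

end HilbertBasis

theorem stmt_8_general {H : Type*} [NormedAddCommGroup H] [InnerProductSpace ℂ H]
    {I : Type*} (e : HilbertBasis I ℂ H) (T : H →L[ℂ] H) (c : I → ℝ)
    (hT : ∀ i, T (e i) = (c i : ℂ) • e i)
    (ε : ℝ) (hε0 : 0 < ε)
    (i₀ : I) (hi₀ : 1 / ε ≤ c i₀) (hc : ∀ i, -1 ≤ c i)
    (f : H) (hf : ⟪f, e i₀⟫_ℂ = (ε : ℂ)) (hnorm : ‖f‖ ^ 2 = ε) :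
    ε ^ 2 ≤ (⟪T f, f⟫_ℂ).re := by
  have hcoeff : ‖⟪e i₀, f⟫_ℂ‖ = ε := by
    rw [← inner_conj_symm, hf, Complex.conj_ofReal, Complex.norm_real, Real.norm_of_nonneg hε0.le]
  have hbound := e.le_re_apply_inner_self hT hc i₀ f
  rw [hcoeff, hnorm] at hbound
  have hε : ε ≤ c i₀ * ε ^ 2 := by
    calc ε = 1 / ε * ε ^ 2 := by field_simp
      _ ≤ c i₀ * ε ^ 2 := by gcongr
  linarith

/-- Abstract spectral decomposition argument: if `T` is a continuous linear operator on a
complex Hilbert space diagonalised by a Hilbert basis `(e i)` with real eigenvalues `c i`,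
all eigenvalues are `≥ −1`, some eigenvalue `c i₀ ≥ 1/ε`, and `f` satisfies
`⟪f, e i₀⟫ = ε` and `‖f‖² = ε`, then `Re ⟪T f, f⟫ ≥ ε²`. -/
theorem stmt_8 {H : Type*} [NormedAddCommGroup H] [InnerProductSpace ℂ H] [CompleteSpace H]
    {I : Type*} (e : HilbertBasis I ℂ H) (T : H →L[ℂ] H) (c : I → ℝ)
    (hT : ∀ i, T (e i) = (c i : ℂ) • e i)
    (ε : ℝ) (hε0 : 0 < ε) (hε1 : ε ≤ 1)
    (i₀ : I) (hi₀ : 1 / ε ≤ c i₀) (hc : ∀ i, -1 ≤ c i)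
    (f : H) (hf : ⟪f, e i₀⟫_ℂ = (ε : ℂ)) (hnorm : ‖f‖ ^ 2 = ε) :
    ε ^ 2 ≤ (⟪T f, f⟫_ℂ).re :=
  stmt_8_general e T c hT ε hε0 i₀ hi₀ hc f hf hnorm
end

section
/- Let σ > 0 and let a be a real number with √σ < a < 1/2. Then for every real R ≥ 2, ∫_{0}^{R} cosh(a u) √(1 − cosh(u)/cosh(R)) du ≥ (1/3) sinh(√σ · R). -/
set_option maxHeartbeats 1000000

open Real intervalIntegral in
private lemma integral_cosh_mul (a c : ℝ) (ha : 0 < a) :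
    ∫ u in (0:ℝ)..c, Real.cosh (a * u) = Real.sinh (a * c) / a := by
  have h : ∀ u ∈ Set.uIcc (0:ℝ) c,
      HasDerivAt (fun x => Real.sinh (a * x) / a) (Real.cosh (a * u)) u := by
    intro u _
    have h1 := (Real.hasDerivAt_sinh (a * u)).comp u ((hasDerivAt_id u).const_mul a)
    have h2 := h1.div_const a
    simp only [Function.comp, id] at h2
    have : Real.cosh (a * u) * (a * 1) / a = Real.cosh (a * u) := by
      field_simp
    rw [this] at h2
    exact h2
  have hcont : IntervalIntegrable (fun u => Real.cosh (a * u)) MeasureTheory.volume 0 c :=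
    (Real.continuous_cosh.comp (continuous_const.mul continuous_id)).intervalIntegrable 0 c
  rw [intervalIntegral.integral_eq_sub_of_hasDerivAt h hcont]
  simp

/-- Lemma 4.3 of the paper: for `σ > 0`, `√σ < a < 1/2` and `R ≥ 2`,
`∫₀^R cosh(au)√(1 − cosh(u)/cosh(R)) du ≥ (1/3) sinh(√σ R)`. -/
theorem stmt_11 (σ a : ℝ) (hσ : 0 < σ) (ha1 : Real.sqrt σ < a) (ha2 : a < 1 / 2)
    (R : ℝ) (hR : 2 ≤ R) :
    (1 / 3) * Real.sinh (Real.sqrt σ * R)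
      ≤ ∫ u in (0:ℝ)..R, Real.cosh (a * u) * Real.sqrt (1 - Real.cosh u / Real.cosh R) := by
  have ha0 : 0 < a := lt_of_le_of_lt (Real.sqrt_nonneg σ) ha1
  set f : ℝ → ℝ := fun u => Real.cosh (a * u) * Real.sqrt (1 - Real.cosh u / Real.cosh R)
    with hfdef
  clear_value f
  have hfc : Continuous f := by
    rw [hfdef]
    apply Continuous.mul
    · exact Real.continuous_cosh.comp (continuous_const.mul continuous_id)
    · exact Real.continuous_sqrt.comp (continuous_const.sub
        ((Real.continuous_cosh).div_const _))
  have hfnn : ∀ u, 0 ≤ f u := by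
    intro u; rw [hfdef]
    exact mul_nonneg (Real.cosh_pos _).le (Real.sqrt_nonneg _)
  have hcoshR : (0:ℝ) < Real.cosh R := Real.cosh_pos R
  -- key ratio bound
  have hratio : Real.cosh (R - 1) / Real.cosh R ≤ 3 / 4 := by
    rw [div_le_iff₀ hcoshR]
    have e1 := Real.exp_one_gt_d9
    have e2 := Real.exp_one_lt_d9
    have hA : Real.exp (R - 1) * Real.exp 1 = Real.exp R := by
      rw [← Real.exp_add]; ring_nf
    have hB : Real.exp (-(R - 1)) * Real.exp R = Real.exp 1 := by
      rw [← Real.exp_add]; ring_nf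
    have hC : Real.exp (-R) * Real.exp R = 1 := by rw [← Real.exp_add]; simp
    have hE : Real.exp 1 * Real.exp 1 ≤ Real.exp R := by
      rw [← Real.exp_add]; exact Real.exp_le_exp.2 (by linarith)
    have hEpos : (0:ℝ) < Real.exp R := Real.exp_pos R
    have hApos : (0:ℝ) < Real.exp (R - 1) := Real.exp_pos _
    have hBpos : (0:ℝ) < Real.exp (-(R - 1)) := Real.exp_pos _
    have hCpos : (0:ℝ) < Real.exp (-R) := Real.exp_pos _
    have he1pos : (0:ℝ) < Real.exp 1 := Real.exp_pos 1
    rw [Real.cosh_eq, Real.cosh_eq]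
    set P := Real.exp 1 with hPdef
    set E := Real.exp R
    set A := Real.exp (R - 1)
    set B := Real.exp (-(R - 1))
    set C := Real.exp (-R)
    have h1 : (3*P - 4) * (E*E) ≥ P*(4*P - 3) := by
      have hE2 : (P*P)*(P*P) ≤ E*E :=
        mul_le_mul hE hE (by positivity) hEpos.le
      have hP4 : (0:ℝ) ≤ 3*P - 4 := by nlinarith
      have hPP : (7:ℝ) ≤ P*P := by nlinarith
      have c1 : P*(4*P-3) ≤ 4*((P*P)*(P*P)) := by nlinarith
      have c2 : (3*P-4)*((P*P)*(P*P)) ≤ (3*P-4)*(E*E) :=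
        mul_le_mul_of_nonneg_left hE2 hP4
      nlinarith [c1, c2, mul_le_mul_of_nonneg_right hP4 (le_trans (by norm_num) hPP)]
    have expand : P * E * (3*E + 3*C - 4*A - 4*B)
        = (3*P - 4)*(E*E) - (4*P*P - 3*P) := by
      linear_combination (3*P) * hC - 4*E * hA - 4*P * hB
    have h2 : 0 ≤ P * E * (3*E + 3*C - 4*A - 4*B) := by
      rw [expand]; nlinarith
    by_contra hcon
    push_neg at hcon
    nlinarith [mul_pos he1pos hEpos]
  -- pointwise lower bound on [0, R-1]
  have hpt : ∀ u ∈ Set.Icc (0:ℝ) (R - 1),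
      (1 / 2) * Real.cosh (a * u) ≤ f u := by
    intro u hu
    have hcu : Real.cosh u ≤ Real.cosh (R - 1) := by
      rw [Real.cosh_le_cosh]
      rw [abs_of_nonneg hu.1, abs_of_nonneg (by linarith [hu.1, hu.2] : (0:ℝ) ≤ R - 1)]
      exact hu.2
    have h14 : (1/4 : ℝ) ≤ 1 - Real.cosh u / Real.cosh R := by
      have : Real.cosh u / Real.cosh R ≤ Real.cosh (R - 1) / Real.cosh R := by
        gcongr
      linarith [le_trans this hratio]
    have hs : (1/2 : ℝ) ≤ Real.sqrt (1 - Real.cosh u / Real.cosh R) := by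
      rw [Real.le_sqrt' (by norm_num)]
      nlinarith
    calc (1/2) * Real.cosh (a * u) ≤ Real.sqrt (1 - Real.cosh u / Real.cosh R) * Real.cosh (a*u) :=
          mul_le_mul_of_nonneg_right hs (Real.cosh_pos _).le
      _ = f u := by simp only [hfdef]; ring
  -- integrability
  have hInt1 : IntervalIntegrable f MeasureTheory.volume 0 (R - 1) :=
    hfc.intervalIntegrable _ _
  have hInt2 : IntervalIntegrable (fun u => (1/2) * Real.cosh (a * u))
      MeasureTheory.volume 0 (R - 1) :=
    (continuous_const.mul (Real.continuous_cosh.comp (continuous_const.mul continuous_id))).intervalIntegrable _ _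
  have hR1 : (0:ℝ) ≤ R - 1 := by linarith
  have step1 : ∫ u in (0:ℝ)..(R-1), (1/2) * Real.cosh (a * u) ≤ ∫ u in (0:ℝ)..(R-1), f u :=
    intervalIntegral.integral_mono_on hR1 hInt2 hInt1 hpt
  have step2 : ∫ u in (0:ℝ)..(R-1), f u ≤ ∫ u in (0:ℝ)..R, f u := by
    rw [← intervalIntegral.integral_add_adjacent_intervals
      (hfc.intervalIntegrable 0 (R-1)) (hfc.intervalIntegrable (R-1) R)]
    have : 0 ≤ ∫ u in (R-1)..R, f u :=
      intervalIntegral.integral_nonneg (by linarith) (fun u _ => hfnn u)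
    exact le_add_of_nonneg_right this
  have hval : ∫ u in (0:ℝ)..(R-1), (1/2) * Real.cosh (a * u)
      = (1/2) * (Real.sinh (a * (R - 1)) / a) := by
    rw [intervalIntegral.integral_const_mul, integral_cosh_mul a (R-1) ha0]
  -- sinh comparisons
  have hsnn : 0 ≤ Real.sinh (a * (R - 1)) :=
    Real.sinh_nonneg_iff.mpr (mul_nonneg ha0.le hR1)
  have hsinh3 : Real.sinh (a * R) ≤ 3 * Real.sinh (a * (R - 1)) := by
    have hadd : Real.sinh (a * R)
        = Real.sinh (a * (R-1)) * Real.cosh a + Real.cosh (a * (R-1)) * Real.sinh a := by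
      rw [← Real.sinh_add]; ring_nf
    have hsub : 0 ≤ Real.sinh (a * (R-1)) * Real.cosh a - Real.cosh (a * (R-1)) * Real.sinh a := by
      rw [← Real.sinh_sub]
      exact Real.sinh_nonneg_iff.mpr (by nlinarith)
    have hca : Real.cosh a ≤ 3 / 2 := by
      have h1 : Real.cosh a ≤ Real.cosh (1/2) := by
        rw [Real.cosh_le_cosh]
        rw [abs_of_nonneg ha0.le, abs_of_nonneg (by norm_num : (0:ℝ) ≤ 1/2)]
        exact ha2.le
      have h2 : Real.exp (1/2) ≤ 2 := by
        have : Real.exp (1/2) * Real.exp (1/2) = Real.exp 1 := by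
          rw [← Real.exp_add]; norm_num
        nlinarith [Real.exp_pos (1/2 : ℝ), Real.exp_one_lt_d9]
      have h3 : Real.exp (-(1/2) : ℝ) ≤ 1 := Real.exp_le_one_iff.mpr (by norm_num)
      have h4 : Real.cosh (1/2 : ℝ) ≤ 3/2 := by
        rw [Real.cosh_eq]; linarith
      linarith
    nlinarith
  have hmono : Real.sinh (Real.sqrt σ * R) ≤ Real.sinh (a * R) :=
    Real.sinh_le_sinh.mpr (mul_le_mul_of_nonneg_right ha1.le (by linarith))
  have hfinal : Real.sinh (a * (R - 1)) ≤ (1/2) * (Real.sinh (a * (R-1)) / a) := by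
    rw [mul_div_assoc', le_div_iff₀ ha0]
    have := mul_le_mul_of_nonneg_left ha2.le hsnn
    linarith
  calc (1/3) * Real.sinh (Real.sqrt σ * R)
      ≤ (1/3) * Real.sinh (a * R) := by linarith
    _ ≤ Real.sinh (a * (R - 1)) := by linarith
    _ ≤ (1/2) * (Real.sinh (a * (R-1)) / a) := hfinal
    _ = ∫ u in (0:ℝ)..(R-1), (1/2) * Real.cosh (a * u) := hval.symm
    _ ≤ ∫ u in (0:ℝ)..(R-1), f u := step1
    _ ≤ ∫ u in (0:ℝ)..R, f u := step2
end

section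
/- For every real R ≥ 2 and every real x with 0 < x ≤ 1/2, one has 1 ≤ ((2 + 2x)/(4x)) · tanh(R x) · coth(R). -/
lemma key_exp (s : ℝ) (h0 : 0 ≤ s) (h2 : s ≤ 2) : 4 + 3 * s ≤ (4 - s) * Real.exp s := by
  have h := Real.sum_le_exp_of_nonneg h0 4
  have hsum : ∑ i ∈ Finset.range 4, s ^ i / i.factorial
      = 1 + s + s ^ 2 / 2 + s ^ 3 / 6 := by
    simp [Finset.sum_range_succ, Nat.factorial]
  rw [hsum] at h
  have h2s : 0 ≤ s * (2 - s) := mul_nonneg h0 (by linarith)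
  have hq : 0 ≤ s ^ 2 * (6 + s - s ^ 2) :=
    mul_nonneg (sq_nonneg s) (by nlinarith)
  nlinarith [mul_nonneg (by linarith : (0:ℝ) ≤ 4 - s)
    (by linarith : (0:ℝ) ≤ Real.exp s - (1 + s + s ^ 2 / 2 + s ^ 3 / 6))]

lemma core (x : ℝ) (hx0 : 0 < x) (hx1 : x ≤ 1 / 2) :
    2 * x * Real.cosh (2 * x) ≤ (1 + x) * Real.sinh (2 * x) := by
  have hE : 0 < Real.exp (2 * x) := Real.exp_pos _
  have h4 : Real.exp (4 * x) = Real.exp (2 * x) * Real.exp (2 * x) := by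
    rw [← Real.exp_add]; ring_nf
  have hk := key_exp (4 * x) (by linarith) (by linarith)
  rw [h4] at hk
  rw [Real.cosh_eq, Real.sinh_eq]
  have hneg : Real.exp (-(2 * x)) = 1 / Real.exp (2 * x) := by
    rw [Real.exp_neg]; exact inv_eq_one_div _
  rw [hneg]
  have hinv : Real.exp (2 * x) * (1 / Real.exp (2 * x)) = 1 := by
    field_simp
  nlinarith [hk, hinv, mul_pos hE hE, hE.le]

/-- The Claim inside the proof of Lemma 4.3: for `R ≥ 2` and `0 < x ≤ 1/2`,
`1 ≤ ((2 + 2x)/(4x)) · tanh(Rx) · coth(R)`. -/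
theorem stmt_14 (R : ℝ) (hR : 2 ≤ R) (x : ℝ) (hx0 : 0 < x) (hx1 : x ≤ 1 / 2) :
    1 ≤ ((2 + 2 * x) / (4 * x)) * Real.tanh (R * x) * (Real.cosh R / Real.sinh R) := by
  have hc2 : 0 < Real.cosh (2 * x) := Real.cosh_pos _
  have hcR : 0 < Real.cosh (R * x) := Real.cosh_pos _
  have hmono : Real.tanh (2 * x) ≤ Real.tanh (R * x) := by
    rw [Real.tanh_eq_sinh_div_cosh, Real.tanh_eq_sinh_div_cosh,
      div_le_div_iff₀ hc2 hcR]
    have hs : 0 ≤ Real.sinh (R * x - 2 * x) :=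
      Real.sinh_nonneg_iff.2 (by nlinarith)
    rw [Real.sinh_sub] at hs
    nlinarith
  have hAB : 1 ≤ ((2 + 2 * x) / (4 * x)) * Real.tanh (2 * x) := by
    rw [Real.tanh_eq_sinh_div_cosh]
    rw [div_mul_div_comm, le_div_iff₀ (by positivity)]
    have := core x hx0 hx1
    nlinarith
  have hAB' : 1 ≤ ((2 + 2 * x) / (4 * x)) * Real.tanh (R * x) := by
    have hA : 0 ≤ (2 + 2 * x) / (4 * x) := by positivity
    calc (1:ℝ) ≤ ((2 + 2 * x) / (4 * x)) * Real.tanh (2 * x) := hAB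
    _ ≤ ((2 + 2 * x) / (4 * x)) * Real.tanh (R * x) := by
        exact mul_le_mul_of_nonneg_left hmono hA
  have hsR : 0 < Real.sinh R := Real.sinh_pos_iff.2 (by linarith)
  have hC : 1 ≤ Real.cosh R / Real.sinh R := by
    rw [le_div_iff₀ hsR, one_mul]
    rw [Real.cosh_eq, Real.sinh_eq]
    have : 0 < Real.exp (-R) := Real.exp_pos _
    linarith
  calc (1:ℝ) = 1 * 1 := by ring
  _ ≤ ((2 + 2 * x) / (4 * x)) * Real.tanh (R * x) * (Real.cosh R / Real.sinh R) :=
      mul_le_mul hAB' hC (by norm_num) (by linarith)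
end

section
/- Let σ > 0 and ε > 0, and let a be a real number with √σ < a < 1/2. Then for every real R with R ≥ 2 and R ≥ (2/√σ) · log(2 + 2/ε), one has (4√2 / cosh(R)^{√σ/2}) · ∫_{0}^{R} cosh(a u) √(1 − cosh(u)/cosh(R)) du ≥ 1/ε. -/
/-!
Write `s = √σ` and `X = e^{sR/2}`. On `[0, R - 2]` the ratio `cosh u / cosh R` is at most
`2e^{u-R} ≤ 1/2`, so the square root is at least `1/√2`, and `cosh(au) ≥ e^{su}/2` since `s < a`.
Integrating `e^{su}` over `[0, R - 2]` bounds the integral below by `(e^{s(R-2)} - 1)/(2√2 s)`,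
while `cosh(R)^{s/2} ≤ X`. As `s < 1/2` we have `1/s > 2` and `e^{s(R-2)} ≥ X²/e ≥ X²/3`, so the
expression is at least `4(X²/3 - 1)/X ≥ 4X/3 - 2`, and the hypothesis on `R` says `X ≥ 2 + 2/ε`.
-/

open Real intervalIntegral

namespace Real

lemma cosh_le_exp_of_nonneg {x : ℝ} (hx : 0 ≤ x) : cosh x ≤ exp x := by
  rw [cosh_eq]
  linarith [exp_le_exp.2 (by linarith : -x ≤ x)]

lemma exp_div_two_le_cosh (x : ℝ) : exp x / 2 ≤ cosh x := by
  rw [cosh_eq]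
  linarith [exp_pos (-x)]

lemma cosh_rpow_le_exp {x t : ℝ} (hx : 0 ≤ x) (ht : 0 ≤ t) : cosh x ^ t ≤ exp (t * x) := by
  calc cosh x ^ t ≤ exp x ^ t := rpow_le_rpow (cosh_pos x).le (cosh_le_exp_of_nonneg hx) ht
    _ = exp (t * x) := by rw [← exp_mul, mul_comm]

lemma integral_exp_mul {s : ℝ} (hs : s ≠ 0) (T : ℝ) :
    ∫ u in (0:ℝ)..T, exp (s * u) = (exp (s * T) - 1) / s := by
  rw [integral_comp_mul_left (fun u => exp u) hs, integral_exp]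
  simp [div_eq_inv_mul]

lemma cosh_div_cosh_le_half {u R : ℝ} (hu : 0 ≤ u) (huR : u ≤ R - 2) :
    cosh u / cosh R ≤ 1 / 2 := by
  have he : 4 * exp u ≤ exp R := by
    have h2 : (2:ℝ) ≤ exp 1 := by linarith [add_one_le_exp (1:ℝ)]
    calc 4 * exp u = (2 * 2) * exp u := by norm_num
      _ ≤ (exp 1 * exp 1) * exp u := by gcongr
      _ = exp (u + 2) := by rw [← exp_add, ← exp_add]; ring_nf
      _ ≤ exp R := exp_le_exp.2 (by linarith)
  rw [div_le_iff₀ (cosh_pos R)]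
  linarith [cosh_le_exp_of_nonneg hu, exp_div_two_le_cosh R]

lemma sq_exp_mul_half_div_three_le_exp_mul_sub_two {s : ℝ} (hs : s ≤ 1 / 2) (R : ℝ) :
    exp (s * R / 2) ^ 2 / 3 ≤ exp (s * (R - 2)) := by
  have hexp : 1 / 3 ≤ exp (-(2 * s)) := by
    refine le_trans ?_ (exp_le_exp.2 (by linarith : (-1 : ℝ) ≤ -(2 * s)))
    rw [exp_neg, inv_eq_one_div]
    exact one_div_le_one_div_of_le (exp_pos 1) (by linarith [exp_one_lt_d9])
  have hsplit : exp (s * (R - 2)) = exp (s * R / 2) ^ 2 * exp (-(2 * s)) := by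
    rw [← exp_nat_mul, ← exp_add]; ring_nf
  rw [hsplit, div_eq_mul_one_div]
  gcongr

end Real

lemma exp_mul_div_le_cosh_mul_sqrt_one_sub_cosh_div {s a u R : ℝ} (hsa : s ≤ a) (hu : 0 ≤ u)
    (huR : u ≤ R - 2) :
    exp (s * u) / (2 * √2) ≤ cosh (a * u) * √(1 - cosh u / cosh R) := by
  have hcosh : exp (s * u) / 2 ≤ cosh (a * u) :=
    (div_le_div_of_nonneg_right (exp_le_exp.2 (mul_le_mul_of_nonneg_right hsa hu))
      zero_le_two).trans (exp_div_two_le_cosh _)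
  have hsqrt : 1 / √2 ≤ √(1 - cosh u / cosh R) := by
    rw [one_div, ← sqrt_inv]
    exact sqrt_le_sqrt (by linarith [cosh_div_cosh_le_half hu huR])
  calc exp (s * u) / (2 * √2) = exp (s * u) / 2 * (1 / √2) := by field_simp
    _ ≤ cosh (a * u) * √(1 - cosh u / cosh R) := by gcongr

lemma exp_sub_one_div_le_integral_cosh_mul_sqrt {s a R : ℝ} (hs : 0 < s) (hsa : s ≤ a)
    (hR : 2 ≤ R) :
    (exp (s * (R - 2)) - 1) / (2 * √2 * s) ≤
      ∫ u in (0:ℝ)..R, cosh (a * u) * √(1 - cosh u / cosh R) := by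
  have hcont : Continuous fun u => cosh (a * u) * √(1 - cosh u / cosh R) := by fun_prop
  have hnonneg : ∀ u, 0 ≤ cosh (a * u) * √(1 - cosh u / cosh R) :=
    fun u => mul_nonneg (cosh_pos _).le (sqrt_nonneg _)
  calc (exp (s * (R - 2)) - 1) / (2 * √2 * s)
      = ∫ u in (0:ℝ)..R - 2, exp (s * u) / (2 * √2) := by
        rw [integral_div, integral_exp_mul hs.ne']; ring
    _ ≤ ∫ u in (0:ℝ)..R - 2, cosh (a * u) * √(1 - cosh u / cosh R) :=
        integral_mono_on (by linarith) ((by fun_prop : Continuous _).intervalIntegrable _ _)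
          (hcont.intervalIntegrable _ _)
          fun u hu => exp_mul_div_le_cosh_mul_sqrt_one_sub_cosh_div hsa hu.1 hu.2
    _ ≤ ∫ u in (0:ℝ)..R, cosh (a * u) * √(1 - cosh u / cosh R) :=
        integral_mono_interval le_rfl (by linarith) (by linarith)
          (.of_forall hnonneg) (hcont.intervalIntegrable _ _)

/-- Part (3) of Lemma 4.4 in real-analytic form: for `σ > 0`, `ε > 0`, `√σ < a < 1/2`,
and `R ≥ max{2, (2/√σ) log(2 + 2/ε)}`, the Selberg transform value
`(4√2/cosh(R)^{√σ/2}) ∫₀^R cosh(au)√(1 − cosh(u)/cosh(R)) du` is at least `1/ε`. -/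
theorem stmt_17 (σ ε a : ℝ) (hσ : 0 < σ) (hε : 0 < ε)
    (ha1 : Real.sqrt σ < a) (ha2 : a < 1 / 2)
    (R : ℝ) (hR2 : 2 ≤ R) (hRlog : (2 / Real.sqrt σ) * Real.log (2 + 2 / ε) ≤ R) :
    1 / ε ≤ (4 * Real.sqrt 2 / Real.cosh R ^ (Real.sqrt σ / 2))
      * ∫ u in (0:ℝ)..R, Real.cosh (a * u) * Real.sqrt (1 - Real.cosh u / Real.cosh R) := by
  set s := √σ
  have hs : 0 < s := sqrt_pos.2 hσ
  have hs2 : s < 1 / 2 := ha1.trans ha2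
  set X := exp (s * R / 2) with hXdef
  set Y := exp (s * (R - 2))
  have hX : 2 + 2 / ε ≤ X := by
    rw [div_mul_eq_mul_div, div_le_iff₀ hs] at hRlog
    exact (log_le_iff_le_exp (by positivity)).1 (by linarith)
  have hX2 : 2 ≤ X := by linarith [div_pos two_pos hε]
  have hY : X ^ 2 / 3 ≤ Y := sq_exp_mul_half_div_three_le_exp_mul_sub_two hs2.le R
  have hY1 : 0 ≤ Y - 1 := by nlinarith
  have hpre : 4 * √2 / X ≤ 4 * √2 / cosh R ^ (s / 2) :=
    div_le_div_of_nonneg_left (by positivity) (rpow_pos_of_pos (cosh_pos R) _)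
      ((cosh_rpow_le_exp (x := R) (by linarith) (by positivity)).trans_eq
        (by rw [hXdef]; ring_nf))
  calc 1 / ε ≤ 4 * X / 3 - 2 := by
        have : 2 / ε = 2 * (1 / ε) := by ring
        linarith [one_div_pos.2 hε]
    _ ≤ 4 * (X ^ 2 / 3 - 1) / X := by
        rw [le_div_iff₀ (by positivity)]; nlinarith
    _ ≤ 4 * (Y - 1) / X := by gcongr
    _ ≤ 2 * (Y - 1) / (s * X) := by
        rw [div_le_div_iff₀ (by positivity) (by positivity)]
        nlinarith [mul_nonneg (mul_nonneg hY1 (by linarith : (0:ℝ) ≤ X))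
          (by linarith : 0 ≤ 1 - 2 * s)]
    _ = 4 * √2 / X * ((Y - 1) / (2 * √2 * s)) := by field_simp; ring
    _ ≤ _ := mul_le_mul hpre (exp_sub_one_div_le_integral_cosh_mul_sqrt hs ha1.le hR2)
        (by positivity) (by positivity)
end
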